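/- arXiv:1304.3971 — 2 statements merged into one kernel-verified Lean document; each statement's English description precedes it below -/
import Mathlib

section
/- Let R be a principal ideal domain with fraction field K, let L be a free R-module of finite rank n, and let A : L → L^T := Hom_R(L, R) be induced by an alternating R-bilinear pairing on L with det A ≠ 0 (i.e., A ⊗ K is an isomorphism). Then the pairing ⟨x, y⟩_A on coker A × coker A with values in K/R, induced by (x, y) ↦ x^t A^{-1} y on L^T × L^T, is well-defined, alternating, and nondegenerate (its left and right kernels are zero). -/
open scoped Matrix

/-!
Over `K = Frac R` the matrix `B = A ⊗ K` is invertible and again alternating. The quadratic form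
of an alternating matrix vanishes, so `vᵗ B⁻¹ v = (B w)ᵗ w = 0` for `v = B w`, and `Bᵀ = -B`
gives `(A z)ᵗ B⁻¹ y = -zᵗ y ∈ R` while `xᵗ B⁻¹ (A z) = xᵗ z ∈ R`; by biadditivity the pairing
descends to `coker A`. Being alternating it is antisymmetric, so nondegeneracy on one side
suffices: if `y` pairs integrally with every basis vector `eᵢ`, then `B⁻¹ y = z` has entries in
`R` and `y = A z`.
-/

/-- An alternating matrix: zero diagonal and `Aᵀ = -A`. -/
def Matrix.IsAlternating {n : Type*} [Fintype n] [DecidableEq n] {R : Type*} [Ring R]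
    (A : Matrix n n R) : Prop :=
  A.transpose = -A ∧ ∀ i, A i i = 0

/-- The value `xᵗ A⁻¹ y mod R` in `K/R`, where `K = Frac R`. -/
noncomputable def pairingVal {R : Type*} [CommRing R] [IsDomain R] {n : ℕ}
    (A : Matrix (Fin n) (Fin n) R) (x y : Fin n → R) :
    FractionRing R ⧸ LinearMap.range (Algebra.linearMap R (FractionRing R)) :=
  Submodule.Quotient.mk
    ((fun i => algebraMap R (FractionRing R) (x i)) ⬝ᵥ
      ((A.map (algebraMap R (FractionRing R)))⁻¹ *ᵥ fun i => algebraMap R (FractionRing R) (y i)))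

theorem RingHom.comp_mulVec {m n R S : Type*} [Fintype n] [NonAssocSemiring R]
    [NonAssocSemiring S] (f : R →+* S) (M : Matrix m n R) (v : n → R) :
    f ∘ (M *ᵥ v) = M.map f *ᵥ (f ∘ v) :=
  funext (f.map_mulVec M v)

theorem Matrix.IsAlternating.map {n R S : Type*} [Fintype n] [DecidableEq n] [Ring R] [Ring S]
    {A : Matrix n n R} (hA : A.IsAlternating) (f : R →+* S) : (A.map f).IsAlternating :=
  ⟨by rw [← transpose_map, hA.1, Matrix.map_neg f (map_neg f)], fun i => by simp [hA.2 i]⟩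

namespace Matrix

variable {n K : Type*} [Fintype n] [DecidableEq n] [CommRing K]

theorem IsAlternating.dotProduct_mulVec_self {A : Matrix n n K} (hA : A.IsAlternating)
    (v : n → K) : v ⬝ᵥ (A *ᵥ v) = 0 := by
  have hskew : ∀ i j, A j i = -A i j := fun i j => by
    simpa using congrFun (congrFun hA.1 i) j
  rw [show v ⬝ᵥ (A *ᵥ v) = ∑ q : n × n, v q.1 * (A q.1 q.2 * v q.2) by
    simp [Fintype.sum_prod_type, dotProduct, mulVec, Finset.mul_sum]]
  -- cancel the term at `(i, j)` against the one at `(j, i)`: no division by 2, so the diagonal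
  -- has to vanish by hypothesis rather than by skew-symmetry
  refine Finset.sum_ninvolution Prod.swap (fun q => ?_) (fun q hq hswap => ?_)
    (fun q => Finset.mem_univ _) Prod.swap_swap
  · rw [Prod.fst_swap, Prod.snd_swap, hskew]
    ring
  · rw [show q.2 = q.1 from congrArg Prod.fst hswap, hA.2] at hq
    exact hq (by ring)

theorem mulVec_dotProduct_nonsing_inv_mulVec {B : Matrix n n K} (hB : Bᵀ = -B)
    (hdet : IsUnit B.det) (w u : n → K) : (B *ᵥ w) ⬝ᵥ (B⁻¹ *ᵥ u) = -(w ⬝ᵥ u) := by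
  rw [dotProduct_comm, dotProduct_mulVec, ← mulVec_transpose, hB, neg_mulVec, mulVec_mulVec,
    mul_nonsing_inv B hdet, one_mulVec, neg_dotProduct, dotProduct_comm]

theorem IsAlternating.dotProduct_nonsing_inv_mulVec_self {B : Matrix n n K}
    (hB : B.IsAlternating) (hdet : IsUnit B.det) (v : n → K) : v ⬝ᵥ (B⁻¹ *ᵥ v) = 0 := by
  obtain ⟨w, rfl⟩ : ∃ w, v = B *ᵥ w :=
    ⟨B⁻¹ *ᵥ v, by rw [mulVec_mulVec, mul_nonsing_inv B hdet, one_mulVec]⟩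
  rw [mulVec_mulVec, nonsing_inv_mul B hdet, one_mulVec, dotProduct_comm,
    hB.dotProduct_mulVec_self]

end Matrix

section pairingVal

variable {R : Type*} [CommRing R] [IsDomain R] {n : ℕ} {A : Matrix (Fin n) (Fin n) R}

local notation "φ" => algebraMap R (FractionRing R)

theorem isUnit_det_map_algebraMap (hdet : A.det ≠ 0) : IsUnit (A.map φ).det := by
  rw [← RingHom.mapMatrix_apply, ← RingHom.map_det, isUnit_iff_ne_zero]
  exact (map_ne_zero_iff _ (IsFractionRing.injective R (FractionRing R))).2 hdet

theorem pairingVal_add_left (x x' y : Fin n → R) :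
    pairingVal A (x + x') y = pairingVal A x y + pairingVal A x' y := by
  simp only [pairingVal, ← Submodule.Quotient.mk_add, ← add_dotProduct]
  congr 2
  ext i
  simp

theorem pairingVal_add_right (x y y' : Fin n → R) :
    pairingVal A x (y + y') = pairingVal A x y + pairingVal A x y' := by
  simp only [pairingVal, ← Submodule.Quotient.mk_add, ← dotProduct_add, ← Matrix.mulVec_add]
  congr 3
  ext i
  simp

theorem pairingVal_mulVec_right (hdet : A.det ≠ 0) (x z : Fin n → R) :
    pairingVal A x (A *ᵥ z) = 0 := by
  refine (Submodule.Quotient.mk_eq_zero _).2 ⟨x ⬝ᵥ z, ?_⟩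
  change _ = _ ⬝ᵥ (_ *ᵥ (φ ∘ (A *ᵥ z)))
  rw [RingHom.comp_mulVec, Matrix.mulVec_mulVec,
    Matrix.nonsing_inv_mul _ (isUnit_det_map_algebraMap hdet), Matrix.one_mulVec]
  exact RingHom.map_dotProduct φ x z

theorem pairingVal_mulVec_left (hAlt : A.IsAlternating) (hdet : A.det ≠ 0) (y z : Fin n → R) :
    pairingVal A (A *ᵥ z) y = 0 := by
  refine (Submodule.Quotient.mk_eq_zero _).2 ⟨-(z ⬝ᵥ y), ?_⟩
  change _ = (φ ∘ (A *ᵥ z)) ⬝ᵥ _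
  rw [RingHom.comp_mulVec, Matrix.mulVec_dotProduct_nonsing_inv_mulVec
    (hAlt.map _).1 (isUnit_det_map_algebraMap hdet), Algebra.linearMap_apply, map_neg]
  exact congrArg Neg.neg (RingHom.map_dotProduct φ z y)

theorem pairingVal_self (hAlt : A.IsAlternating) (hdet : A.det ≠ 0) (x : Fin n → R) :
    pairingVal A x x = 0 :=
  (Submodule.Quotient.mk_eq_zero _).2 <| by
    rw [(hAlt.map _).dotProduct_nonsing_inv_mulVec_self (isUnit_det_map_algebraMap hdet)]
    exact zero_mem _

theorem pairingVal_swap (hAlt : A.IsAlternating) (hdet : A.det ≠ 0) (x y : Fin n → R) :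
    pairingVal A x y = -pairingVal A y x := by
  refine eq_neg_of_add_eq_zero_left ?_
  have := pairingVal_self hAlt hdet (x + y)
  rwa [pairingVal_add_left, pairingVal_add_right, pairingVal_add_right, pairingVal_self hAlt hdet,
    pairingVal_self hAlt hdet, zero_add, add_zero] at this

theorem pairingVal_single_left (i : Fin n) (y : Fin n → R) :
    pairingVal A (Pi.single i 1) y = Submodule.Quotient.mk (((A.map φ)⁻¹ *ᵥ (φ ∘ y)) i) := by
  have hsingle : φ ∘ Pi.single i 1 = Pi.single i 1 := by
    ext j
    simp [Pi.single_apply]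
  change Submodule.Quotient.mk ((φ ∘ Pi.single i 1) ⬝ᵥ _) = _
  rw [hsingle, single_dotProduct, one_mul]
  rfl

theorem exists_mulVec_eq_of_forall_pairingVal_eq_zero (hdet : A.det ≠ 0) (y : Fin n → R)
    (hy : ∀ x, pairingVal A x y = 0) : ∃ z, y = A *ᵥ z := by
  have hint : ∀ i, ∃ r : R, φ r = ((A.map φ)⁻¹ *ᵥ (φ ∘ y)) i :=
    fun i => (Submodule.Quotient.mk_eq_zero _).1 <|
      pairingVal_single_left (A := A) i y ▸ hy (Pi.single i 1)
  choose z hz using hint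
  refine ⟨z, (IsFractionRing.injective R (FractionRing R)).comp_left
    (?_ : φ ∘ y = φ ∘ (A *ᵥ z))⟩
  rw [RingHom.comp_mulVec, show φ ∘ z = _ from funext hz, Matrix.mulVec_mulVec,
    Matrix.mul_nonsing_inv _ (isUnit_det_map_algebraMap hdet), Matrix.one_mulVec]

end pairingVal

theorem stmt6_general (R : Type*) [CommRing R] [IsDomain R] (n : ℕ)
    (A : Matrix (Fin n) (Fin n) R) (hAlt : A.IsAlternating) (hdet : A.det ≠ 0) :
    (∀ x y z : Fin n → R, pairingVal A (x + A *ᵥ z) y = pairingVal A x y) ∧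
    (∀ x y z : Fin n → R, pairingVal A x (y + A *ᵥ z) = pairingVal A x y) ∧
    (∀ x : Fin n → R, pairingVal A x x = 0) ∧
    (∀ y : Fin n → R, (∀ x, pairingVal A x y = 0) → ∃ z, y = A *ᵥ z) ∧
    (∀ x : Fin n → R, (∀ y, pairingVal A x y = 0) → ∃ z, x = A *ᵥ z) := by
  refine ⟨fun x y z => ?_, fun x y z => ?_, pairingVal_self hAlt hdet,
    exists_mulVec_eq_of_forall_pairingVal_eq_zero hdet, fun x hx => ?_⟩
  · rw [pairingVal_add_left, pairingVal_mulVec_left hAlt hdet, add_zero]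
  · rw [pairingVal_add_right, pairingVal_mulVec_right hdet, add_zero]
  · refine exists_mulVec_eq_of_forall_pairingVal_eq_zero hdet x fun y => ?_
    rw [pairingVal_swap hAlt hdet, hx, neg_zero]

/-- For an alternating `A` over a PID `R` with `det A ≠ 0`, the induced pairing
`⟨x,y⟩_A = xᵗ A⁻¹ y mod R` on `coker A × coker A` with values in `K/R` is well-defined
(descends modulo the image of `A` in each variable), alternating, and nondegenerate. -/
theorem stmt6 (R : Type*) [CommRing R] [IsDomain R] [IsPrincipalIdealRing R] (n : ℕ)
    (A : Matrix (Fin n) (Fin n) R) (hAlt : A.IsAlternating) (hdet : A.det ≠ 0) :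
    (∀ x y z : Fin n → R, pairingVal A (x + A *ᵥ z) y = pairingVal A x y) ∧
    (∀ x y z : Fin n → R, pairingVal A x (y + A *ᵥ z) = pairingVal A x y) ∧
    (∀ x : Fin n → R, pairingVal A x x = 0) ∧
    (∀ y : Fin n → R, (∀ x, pairingVal A x y = 0) → ∃ z, y = A *ᵥ z) ∧
    (∀ x : Fin n → R, (∀ y, pairingVal A x y = 0) → ∃ z, x = A *ᵥ z) :=
  stmt6_general R n A hAlt hdet
end

section
/- Let n ∈ Z_{>0}, and let δ : A → B be a homomorphism of Z/nZ-modules with cokernel C such that for every divisor m of n, the map B[m] → C[m] on m-torsion subgroups is surjective. If moreover δ is injective, then the surjection B → C splits, and hence δ(A) is a direct summand of B. -/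
/-!
The hypothesis on torsion says that `K = range δ` is a pure subgroup of `B` (`mB ∩ K = mK` for
all `m`), and a pure subgroup `K` of an abelian group `G` of finite exponent `N` is a direct
summand; a complement `C'` of `K` then gives the section `B ⧸ K ≃ C' ⊆ B`.

The summand statement goes by induction on the number of prime factors of `N`. For a prime
`p ∣ N`, `K ∩ pG` is pure in `pG`, whose exponent divides `N / p`, so it has a complement `E₀`
in `pG`. Take `E ⊇ E₀` maximal with `E ∩ K = 0` (Zorn). For `g ∈ G`, purity moves `g` inside
`g + K` to some `b` with `pb ∈ E₀ ⊆ E`. If `b ∉ E + K`, then `E + ℤb` still meets `K` trivially,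
since `tb ∈ E + K` with `p ∤ t` would put `b` in `E + K` by Bézout; this contradicts maximality.
Hence `E + K = G`.
-/

namespace AddSubgroup

variable {G : Type*} [AddCommGroup G]

/-- Equivalently, `G[m] → (G ⧸ K)[m]` is surjective for every `m`. -/
def IsPure (K : AddSubgroup G) : Prop :=
  ∀ (m : ℕ) (g : G), m • g ∈ K → ∃ k ∈ K, m • k = m • g

theorem gcd_zsmul_mem {H : AddSubgroup G} {g : G} {a b : ℤ} (ha : a • g ∈ H)
    (hb : b • g ∈ H) : (Int.gcd a b : ℤ) • g ∈ H := by
  rw [Int.gcd_eq_gcd_ab, add_smul, mul_comm a, mul_comm b, mul_smul, mul_smul]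
  exact add_mem (zsmul_mem ha _) (zsmul_mem hb _)

theorem IsPure.addSubgroupOf_range_nsmul {K : AddSubgroup G} (hK : K.IsPure) (p : ℕ) :
    (K.addSubgroupOf (DistribSMul.toAddMonoidHom G p).range).IsPure := by
  rintro m ⟨_, g, rfl⟩ hmg
  obtain ⟨k, hk, hkg⟩ := hK (m * p) g (by simpa [mem_addSubgroupOf, mul_smul] using hmg)
  refine ⟨⟨p • k, k, rfl⟩, nsmul_mem hk p, Subtype.ext ?_⟩
  simpa [mul_smul] using hkg

theorem exists_le_maximal_disjoint {E₀ K : AddSubgroup G} (h : Disjoint E₀ K) :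
    ∃ E, E₀ ≤ E ∧ Maximal (Disjoint · K) E := by
  refine zorn_le_nonempty₀ {E | Disjoint E K}
    (fun c hc hchain E hE => ⟨sSup c, ?_, fun _ => le_sSup⟩) E₀ h
  rw [Set.mem_ofPred_eq, disjoint_def]
  intro x hx hxK
  obtain ⟨E', hE'c, hxE'⟩ := (mem_sSup_of_directedOn ⟨E, hE⟩ hchain.directedOn).1 hx
  exact disjoint_def.1 (hc hE'c) hxE' hxK

theorem disjoint_sup_zmultiples {E K : AddSubgroup G} {p : ℕ} (hp : p.Prime)
    (hE : Disjoint E K) {b : G} (hpb : p • b ∈ E) (hb : b ∉ E ⊔ K) :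
    Disjoint (E ⊔ zmultiples b) K := by
  rw [disjoint_def]
  rintro _ hx hxK
  obtain ⟨e, he, _, ⟨t, rfl⟩, rfl⟩ := mem_sup.1 hx
  have htb : t • b ∈ E := by
    by_cases hpt : (p : ℤ) ∣ t
    · obtain ⟨s, rfl⟩ := hpt
      rw [mul_comm, mul_smul, natCast_zsmul]
      exact zsmul_mem hpb s
    · refine absurd ?_ hb
      have hcop : Int.gcd p t = 1 := Int.isCoprime_iff_gcd_eq_one.1 <|
        (Prime.coprime_iff_not_dvd (Nat.prime_iff_prime_int.1 hp)).2 hpt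
      have hgcd := gcd_zsmul_mem (H := E ⊔ K) (by rw [natCast_zsmul]; exact mem_sup_left hpb)
        (by simpa using sub_mem (mem_sup_right hxK) (mem_sup_left he))
      rwa [hcop, Nat.cast_one, one_smul] at hgcd
  exact disjoint_def.1 hE (add_mem he htb) hxK

theorem IsPure.exists_isCompl_of_disjoint {K E₀ : AddSubgroup G} (hK : K.IsPure) {p : ℕ}
    (hp : p.Prime) (hE₀ : Disjoint E₀ K)
    (hlift : ∀ g, ∃ y, p • y ∈ E₀ ∧ p • (g - y) ∈ K) :
    ∃ E, IsCompl K E := by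
  obtain ⟨E, hE₀E, hE⟩ := exists_le_maximal_disjoint hE₀
  refine ⟨E, hE.prop.symm, codisjoint_iff.2 <| (eq_top_iff' _).2 fun g => ?_⟩
  obtain ⟨y, hyE₀, hgy⟩ := hlift g
  obtain ⟨k, hk, hpk⟩ := hK p (g - y) hgy
  have hpb : p • (g - k) ∈ E := by
    rw [smul_sub, hpk, smul_sub, sub_sub_cancel]
    exact hE₀E hyE₀
  by_contra hg
  have hb : g - k ∉ E ⊔ K := fun hb => hg <| by
    simpa [sup_comm] using add_mem hb (mem_sup_right hk)
  have hmax := hE.2 (disjoint_sup_zmultiples hp hE.prop hpb hb) le_sup_left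
  exact hb (mem_sup_left (hmax (mem_sup_right (mem_zmultiples _))))

theorem IsPure.exists_isCompl_of_isCompl_addSubgroupOf {K : AddSubgroup G} (hK : K.IsPure)
    {p : ℕ} (hp : p.Prime) {E' : AddSubgroup (DistribSMul.toAddMonoidHom G p).range}
    (hE' : IsCompl (K.addSubgroupOf _) E') : ∃ E, IsCompl K E := by
  refine hK.exists_isCompl_of_disjoint hp (E₀ := E'.map (AddSubgroup.subtype _)) ?_ fun g => ?_
  · rw [disjoint_def]
    rintro _ ⟨e, he, rfl⟩ heK
    simpa using disjoint_def.1 hE'.disjoint heK he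
  · obtain ⟨k, hk, e, he, hke⟩ := mem_sup.1 (hE'.codisjoint.eq_top ▸
      mem_top (⟨p • g, g, rfl⟩ : (DistribSMul.toAddMonoidHom G p).range))
    obtain ⟨y, hy⟩ := e.2
    refine ⟨y, ⟨e, he, hy.symm⟩, ?_⟩
    have hpg : p • g = k + e := congrArg Subtype.val hke.symm
    have hpy : p • y = e := hy
    rwa [smul_sub, hpg, hpy, add_sub_cancel_right]

theorem IsPure.exists_isCompl {N : ℕ} (hN : N ≠ 0)
    (hG : ∀ g : G, N • g = 0) {K : AddSubgroup G} (hK : K.IsPure) : ∃ E, IsCompl K E := by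
  induction N using induction_on_primes generalizing G with
  | zero => exact absurd rfl hN
  | one =>
    have hKtop : K = ⊤ := (eq_top_iff' K).2 fun g => by
      rw [← one_smul ℕ g, hG g]
      exact K.zero_mem
    exact ⟨⊥, hKtop ▸ isCompl_top_bot⟩
  | prime_mul p M hp ih =>
    obtain ⟨E', hE'⟩ := ih (right_ne_zero_of_mul hN)
      (by rintro ⟨_, g, rfl⟩; ext; simpa [smul_smul, mul_comm M] using hG g)
      (hK.addSubgroupOf_range_nsmul p)
    exact hK.exists_isCompl_of_isCompl_addSubgroupOf hp hE'

end AddSubgroup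

namespace Submodule

theorem isPure_toAddSubgroup_of_torsion_surjective {n : ℕ} {M : Type*} [AddCommGroup M]
    [Module (ZMod n) M] (K : Submodule (ZMod n) M)
    (h : ∀ m : ℕ, m ∣ n → ∀ c : M ⧸ K, m • c = 0 → ∃ b : M, m • b = 0 ∧ K.mkQ b = c) :
    K.toAddSubgroup.IsPure := by
  intro m g hmg
  have hdg : Nat.gcd m n • g ∈ K := by
    have hgcd := AddSubgroup.gcd_zsmul_mem (H := K.toAddSubgroup) (a := m) (b := n)
      (by rwa [natCast_zsmul])
      (by rw [natCast_zsmul, ZModModule.char_nsmul_eq_zero]; exact zero_mem _)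
    rwa [Int.gcd_natCast_natCast, natCast_zsmul] at hgcd
  obtain ⟨b, hb, hbg⟩ := h _ (Nat.gcd_dvd_right m n) (K.mkQ g) <| by
    rw [← map_nsmul, mkQ_apply, Quotient.mk_eq_zero]
    exact hdg
  have hmb : m • b = 0 := by
    obtain ⟨d, hd⟩ := Nat.gcd_dvd_left m n
    rw [hd, mul_comm, mul_smul, hb, smul_zero]
  exact ⟨g - b, (Quotient.eq K).1 hbg.symm, by rw [smul_sub, hmb, sub_zero]⟩

theorem exists_mkQ_rightInverse_of_isCompl {R M : Type*} [Ring R] [AddCommGroup M]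
    [Module R M] {K C : Submodule R M} (h : IsCompl K C) :
    ∃ σ : (M ⧸ K) →ₗ[R] M, ∀ c, K.mkQ (σ c) = c :=
  ⟨C.subtype ∘ₗ (K.quotientEquivOfIsCompl C h).toLinearMap,
    (K.quotientEquivOfIsCompl C h).symm_apply_apply⟩

end Submodule

theorem stmt9_general (n : ℕ) (hn : 0 < n) (A B : Type*) [AddCommGroup A] [Module (ZMod n) A]
    [AddCommGroup B] [Module (ZMod n) B] (δ : A →ₗ[ZMod n] B)
    (htors : ∀ m : ℕ, m ∣ n → ∀ c : B ⧸ LinearMap.range δ, m • c = 0 →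
      ∃ b : B, m • b = 0 ∧ (LinearMap.range δ).mkQ b = c) :
    (∃ σ : (B ⧸ LinearMap.range δ) →ₗ[ZMod n] B,
        ∀ c, (LinearMap.range δ).mkQ (σ c) = c) ∧
      ∃ C' : Submodule (ZMod n) B, IsCompl (LinearMap.range δ) C' := by
  have hpure := (LinearMap.range δ).isPure_toAddSubgroup_of_torsion_surjective htors
  obtain ⟨E, hE⟩ := hpure.exists_isCompl hn.ne' (ZModModule.char_nsmul_eq_zero n)
  have hC : IsCompl (LinearMap.range δ) (AddSubgroup.toZModSubmodule n E) := by
    simpa using (AddSubgroup.toZModSubmodule n).isCompl hE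
  exact ⟨Submodule.exists_mkQ_rightInverse_of_isCompl hC, _, hC⟩

/-- Let `δ : A → B` be an injective homomorphism of `ℤ/nℤ`-modules with cokernel `C` such
that for every divisor `m` of `n` the map `B[m] → C[m]` on `m`-torsion is surjective.
Then the surjection `B → C` splits, and hence `δ(A)` is a direct summand of `B`. -/
theorem stmt9 (n : ℕ) (hn : 0 < n) (A B : Type*) [AddCommGroup A] [Module (ZMod n) A]
    [AddCommGroup B] [Module (ZMod n) B] (δ : A →ₗ[ZMod n] B)
    (hδ : Function.Injective δ)
    (htors : ∀ m : ℕ, m ∣ n → ∀ c : B ⧸ LinearMap.range δ, m • c = 0 →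
      ∃ b : B, m • b = 0 ∧ (LinearMap.range δ).mkQ b = c) :
    (∃ σ : (B ⧸ LinearMap.range δ) →ₗ[ZMod n] B,
        ∀ c, (LinearMap.range δ).mkQ (σ c) = c) ∧
      ∃ C' : Submodule (ZMod n) B, IsCompl (LinearMap.range δ) C' :=
  stmt9_general n hn A B δ htors
end
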